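/- arXiv:1704.05823 — 4 statements merged into one kernel-verified Lean document; each statement's English description precedes it below -/
import Mathlib

section
/- Let M be an n×n matrix over 𝔽₂ with zero diagonal, let p, p' be distinct standard basis vectors with ⟨Mp, p'⟩ = ⟨Mp', p⟩ = 0. For standard basis vectors u ≠ p' define P(u) = ⟨Mu, p⟩·((Mp + p') + ⟨u, Mp⟩·u) and Pᵀ(u) = ⟨Mᵀu, p⟩·((Mᵀp + p') + ⟨u, Mᵀp⟩·u). Then for every standard basis vector u ≠ p' we have ⟨P(u), Pᵀ(u)⟩ = 0. -/
open Matrix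

/-- Standard basis vector over the field with two elements. -/
def e {n : ℕ} (i : Fin n) : Fin n → ZMod 2 := Pi.single i 1

/-- `SM M` is the matrix with `⟨SM M x, y⟩ = ⟨M x, y⟩ * ⟨M y, x⟩` on standard basis vectors. -/
def SM {n : ℕ} (M : Matrix (Fin n) (Fin n) (ZMod 2)) : Matrix (Fin n) (Fin n) (ZMod 2) :=
  Matrix.of fun i j => (M.mulVec (e j) ⬝ᵥ e i) * (M.mulVec (e i) ⬝ᵥ e j)

/-- `P M p p' u = ⟨M u, p⟩ • ((M p + p') + ⟨u, M p⟩ • u)` on standard basis vectors. -/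
def P {n : ℕ} (M : Matrix (Fin n) (Fin n) (ZMod 2)) (p p' u : Fin n) : Fin n → ZMod 2 :=
  (M.mulVec (e u) ⬝ᵥ e p) • ((M.mulVec (e p) + e p') + (e u ⬝ᵥ M.mulVec (e p)) • e u)

/-- `PT M p p' u` is `P` formed with the transpose of `M`. -/
def PT {n : ℕ} (M : Matrix (Fin n) (Fin n) (ZMod 2)) (p p' u : Fin n) : Fin n → ZMod 2 :=
  (Mᵀ.mulVec (e u) ⬝ᵥ e p) • ((Mᵀ.mulVec (e p) + e p') + (e u ⬝ᵥ Mᵀ.mulVec (e p)) • e u)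

lemma dot_e_right {n : ℕ} (v : Fin n → ZMod 2) (i : Fin n) : v ⬝ᵥ e i = v i := by
  simp [e, dotProduct_single]

lemma dot_e_left {n : ℕ} (v : Fin n → ZMod 2) (i : Fin n) : e i ⬝ᵥ v = v i := by
  simp [e, single_dotProduct]

lemma mv_e {n : ℕ} (M : Matrix (Fin n) (Fin n) (ZMod 2)) (j i : Fin n) :
    M.mulVec (e j) i = M i j := by
  simp [e, mulVec_single]

lemma e_apply_ne {n : ℕ} {i j : Fin n} (h : j ≠ i) : e i j = 0 := by
  simp [e, Pi.single_apply, Ne.symm h]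

lemma e_apply_self {n : ℕ} (i : Fin n) : e i i = 1 := by simp [e]

theorem stmt_3 {n : ℕ} (M : Matrix (Fin n) (Fin n) (ZMod 2))
    (hdiag : ∀ q : Fin n, M.mulVec (e q) ⬝ᵥ e q = 0)
    (p p' : Fin n) (hpp' : p ≠ p')
    (h1 : M.mulVec (e p) ⬝ᵥ e p' = 0) (h2 : M.mulVec (e p') ⬝ᵥ e p = 0)
    (A : Fin n → ZMod 2)
    (hA : ∀ x y : Fin n, M.mulVec (e x) ⬝ᵥ Mᵀ.mulVec (e y) =
      (M.mulVec (e x) ⬝ᵥ e y) * (1 + A ⬝ᵥ (e x + e y))) :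
    ∀ u : Fin n, u ≠ p' → P M p p' u ⬝ᵥ PT M p p' u = 0 := by
  intro u hu
  have hcross : M.mulVec (e p) ⬝ᵥ Mᵀ.mulVec (e p) = 0 := by
    rw [hA p p, hdiag p, zero_mul]
  have h1' : M p' p = 0 := by have := h1; rwa [dot_e_right, mv_e] at this
  have h2' : M p p' = 0 := by have := h2; rwa [dot_e_right, mv_e] at this
  simp only [P, PT, smul_dotProduct, dotProduct_smul, add_dotProduct, dotProduct_add,
    smul_eq_mul, hcross, dot_e_left, dot_e_right, mv_e, transpose_apply,
    e_apply_ne hu, e_apply_ne (Ne.symm hu), e_apply_self, h1', h2']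
  generalize M p u = a
  generalize M u p = b
  revert a b; decide
end

section
/- Let M be an n×n matrix over 𝔽₂ with zero diagonal and let p, p' be distinct standard basis vectors satisfying: (a) ⟨Mp, p'⟩ = ⟨Mp', p⟩ = 0; (b) ⟨Mᵀv, p⟩⟨Mu, p'⟩ + ⟨Mu, p⟩⟨Mᵀv, p'⟩ = 0 for all standard basis vectors u, v; (c) there is A ∈ 𝔽₂ⁿ with ⟨Mx, Mᵀy⟩ = ⟨Mx, y⟩(1 + ⟨A, x + y⟩) for all standard basis vectors x, y. Define P(u) = ⟨Mu, p⟩((Mp + p') + ⟨u, Mp⟩u) and Pᵀ(v) = ⟨Mᵀv, p⟩((Mᵀp + p') + ⟨v, Mᵀp⟩v). Then for all standard basis vectors u, v different from p': ⟨Mu + P(u), Mᵀv + Pᵀ(v)⟩ = ⟨Mu + P(u), v⟩·(1 + ⟨A + S(M)p, u + v⟩), where S(M) is defined by ⟨S(M)x, y⟩ = ⟨Mx, y⟩⟨My, x⟩ on basis vectors. -/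
open Matrix

lemma mva {n : ℕ} (N : Matrix (Fin n) (Fin n) (ZMod 2)) (a b : Fin n) :
    N.mulVec (e a) b = N b a := by simp [e, Matrix.mulVec_single]

lemma we {n : ℕ} (w : Fin n → ZMod 2) (a : Fin n) : w ⬝ᵥ e a = w a := by simp [e]

lemma ew {n : ℕ} (w : Fin n → ZMod 2) (a : Fin n) : e a ⬝ᵥ w = w a := by simp [e]

lemma eapp {n : ℕ} (a b : Fin n) : e a b = if a = b then 1 else 0 := by
  simp [e, Pi.single_apply, eq_comm]

theorem stmt_6 {n : ℕ} (M : Matrix (Fin n) (Fin n) (ZMod 2))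
    (hdiag : ∀ q : Fin n, M.mulVec (e q) ⬝ᵥ e q = 0)
    (p p' : Fin n) (hpp' : p ≠ p')
    (h1 : M.mulVec (e p) ⬝ᵥ e p' = 0) (h2 : M.mulVec (e p') ⬝ᵥ e p = 0)
    (hseged : ∀ u v : Fin n,
      (Mᵀ.mulVec (e v) ⬝ᵥ e p) * (M.mulVec (e u) ⬝ᵥ e p') +
        (M.mulVec (e u) ⬝ᵥ e p) * (Mᵀ.mulVec (e v) ⬝ᵥ e p') = 0)
    (A : Fin n → ZMod 2)
    (hA : ∀ x y : Fin n, M.mulVec (e x) ⬝ᵥ Mᵀ.mulVec (e y) =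
      (M.mulVec (e x) ⬝ᵥ e y) * (1 + A ⬝ᵥ (e x + e y))) :
    ∀ u v : Fin n, u ≠ p' → v ≠ p' →
      (M.mulVec (e u) + P M p p' u) ⬝ᵥ (Mᵀ.mulVec (e v) + PT M p p' v) =
        ((M.mulVec (e u) + P M p p' u) ⬝ᵥ e v) *
          (1 + (A + (SM M).mulVec (e p)) ⬝ᵥ (e u + e v)) := by
  intro u v hu hv
  simp only [we, mva, transpose_apply] at h1 h2 hdiag
  have hseg := hseged u v
  simp only [we, mva, transpose_apply] at hseg
  have hA' : ∀ x y : Fin n, M.mulVec (e x) ⬝ᵥ Mᵀ.mulVec (e y) = M y x * (1 + (A x + A y)) := by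
    intro x y
    have := hA x y
    simpa [we, mva, dotProduct_add] using this
  rcases eq_or_ne u v with rfl | huv
  · simp only [P, PT, dotProduct_add, add_dotProduct, dotProduct_smul, smul_dotProduct,
      smul_eq_mul, hA', we, ew, mva, transpose_apply, eapp, SM, of_apply, Pi.add_apply,
      if_pos rfl, hu, hv, Ne.symm hu, Ne.symm hv, if_neg, if_true, hdiag, h1, h2, if_false]
    revert hseg
    generalize M p u = a
    generalize M u p = b
    generalize M p' u = x
    generalize M u p' = y
    generalize A u = au
    generalize A p = ap
    revert a b x y au ap
    decide
  · simp only [P, PT, dotProduct_add, add_dotProduct, dotProduct_smul, smul_dotProduct,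
      smul_eq_mul, hA', we, ew, mva, transpose_apply, eapp, SM, of_apply, Pi.add_apply,
      if_pos rfl, hu, hv, huv, Ne.symm hu, Ne.symm hv, Ne.symm huv, if_neg, if_true, hdiag, h1, h2, if_false]
    revert hseg
    generalize M p u = a
    generalize M u p = b
    generalize M v p = c
    generalize M p v = d
    generalize M v u = m
    generalize M p' u = x
    generalize M v p' = y
    generalize A u = au
    generalize A v = av
    generalize A p = ap
    revert a b c d m x y au av ap
    decide
end

section
/- Let M be an n×n matrix over 𝔽₂ with zero diagonal, let p, p' be distinct standard basis vectors with ⟨Mp, p'⟩ = ⟨Mp', p⟩ = 0, such that the row and column of M indexed by p equal those indexed by p' (⟨Mu, p⟩ = ⟨Mu, p'⟩ and ⟨Mᵀu, p⟩ = ⟨Mᵀu, p'⟩ for all standard basis u). Suppose A ∈ 𝔽₂ⁿ satisfies ⟨Mx, Mᵀy⟩ = ⟨Mx, y⟩(1 + ⟨A, x + y⟩) for all standard basis x, y. Define N by Nu = Mu + ⟨Mu, p⟩((Mp + p') + ⟨u, Mp⟩u) for standard basis u ≠ p', and Np' = 0. Then with C = A + S(M)p + ⟨A, p⟩p', we have ⟨Nu,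 Nᵀv⟩ = ⟨Nu, v⟩(1 + ⟨C, u + v⟩) for all standard basis vectors u, v. -/
open Matrix

lemma e_apply {n : ℕ} (i j : Fin n) : e i j = if j = i then 1 else 0 := by
  simp [e, Pi.single_apply]

lemma e_comm {n : ℕ} (i j : Fin n) : e i j = e j i := by
  simp only [e_apply]; exact if_congr eq_comm rfl rfl

lemma dot_e {n : ℕ} (w : Fin n → ZMod 2) (u : Fin n) : w ⬝ᵥ e u = w u := by
  simp [dotProduct, e_apply]

lemma e_dot {n : ℕ} (w : Fin n → ZMod 2) (u : Fin n) : e u ⬝ᵥ w = w u := by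
  simp [dotProduct, e_apply]

lemma mulVec_e {n : ℕ} (M : Matrix (Fin n) (Fin n) (ZMod 2)) (u i : Fin n) :
    M.mulVec (e u) i = M i u := by
  simp [mulVec, dot_e]

lemma sum_mul_e {n : ℕ} (f : Fin n → ZMod 2) (u : Fin n) :
    ∑ i, f i * e u i = f u := by
  simp [e_apply]

lemma key : ∀ m α β γ δ au av ap t : ZMod 2, (t = 1 → m = 0 ∧ γ = α ∧ δ = β ∧ av = au) →
    m*(1+(au+av)) + α*δ*(1+(au+ap)) + α*δ*(1+(ap+av)) + (m+α*δ)*(γ*δ) + α*δ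
      + α*β*(m + α*(δ + β*t))
    = (m + α*(δ + β*t)) * (1 + ((au + β*α) + (av + δ*γ))) := by decide

theorem stmt_14 {n : ℕ} (M : Matrix (Fin n) (Fin n) (ZMod 2))
    (hdiag : ∀ q : Fin n, M.mulVec (e q) ⬝ᵥ e q = 0)
    (p p' : Fin n) (hpp' : p ≠ p')
    (h1 : M.mulVec (e p) ⬝ᵥ e p' = 0) (h2 : M.mulVec (e p') ⬝ᵥ e p = 0)
    (hrow : ∀ u : Fin n, M.mulVec (e u) ⬝ᵥ e p = M.mulVec (e u) ⬝ᵥ e p')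
    (hcol : ∀ u : Fin n, Mᵀ.mulVec (e u) ⬝ᵥ e p = Mᵀ.mulVec (e u) ⬝ᵥ e p')
    (A : Fin n → ZMod 2)
    (hA : ∀ x y : Fin n, M.mulVec (e x) ⬝ᵥ Mᵀ.mulVec (e y) =
      (M.mulVec (e x) ⬝ᵥ e y) * (1 + A ⬝ᵥ (e x + e y)))
    (N : Matrix (Fin n) (Fin n) (ZMod 2))
    (hN : ∀ u : Fin n, u ≠ p' → N.mulVec (e u) =
      M.mulVec (e u) + (M.mulVec (e u) ⬝ᵥ e p) •
        ((M.mulVec (e p) + e p') + (e u ⬝ᵥ M.mulVec (e p)) • e u))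
    (hNp' : N.mulVec (e p') = 0) :
    ∀ u v : Fin n,
      N.mulVec (e u) ⬝ᵥ Nᵀ.mulVec (e v) =
        (N.mulVec (e u) ⬝ᵥ e v) *
          (1 + (A + (SM M).mulVec (e p) + (A ⬝ᵥ e p) • e p') ⬝ᵥ (e u + e v)) := by
  -- entrywise versions of the hypotheses
  have hd : ∀ q : Fin n, M q q = 0 := fun q => by
    simpa [mulVec_e, dot_e] using hdiag q
  have h1' : M p' p = 0 := by simpa [mulVec_e, dot_e] using h1
  have h2' : M p p' = 0 := by simpa [mulVec_e, dot_e] using h2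
  have hrow' : ∀ u : Fin n, M p u = M p' u := fun u => by
    simpa [mulVec_e, dot_e] using hrow u
  have hcol' : ∀ u : Fin n, M u p = M u p' := fun u => by
    simpa [mulVec_e, dot_e, transpose_apply] using hcol u
  have hA' : ∀ x y : Fin n, (∑ i, M i x * M y i) = M y x * (1 + (A x + A y)) := by
    intro x y
    have h := hA x y
    simp only [dotProduct_add, dot_e, mulVec_e] at h
    simpa [dotProduct, mulVec_e, transpose_apply] using h
  have hN' : ∀ u : Fin n, u ≠ p' → ∀ i : Fin n,
      N i u = M i u + M p u * (M i p + e p' i + M u p * e u i) := by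
    intro u hu i
    have := congrFun (hN u hu) i
    simpa [mulVec_e, dot_e, e_dot, Pi.add_apply, Pi.smul_apply, smul_eq_mul,
      mul_add, add_assoc] using this
  have hNp'' : ∀ i : Fin n, N i p' = 0 := fun i => by
    simpa [mulVec_e] using congrFun hNp' i
  -- the C vector evaluated
  have hC : ∀ w : Fin n, (A + (SM M).mulVec (e p) + A p • e p') w
      = A w + M w p * M p w + A p * e p' w := by
    intro w
    simp [SM, mulVec_e, dot_e, Pi.add_apply, Pi.smul_apply, smul_eq_mul, of_apply]
  intro u v
  -- reduce goal to sums over entries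
  rw [show N.mulVec (e u) ⬝ᵥ Nᵀ.mulVec (e v) = ∑ i, N i u * N v i by
        simp [dotProduct, mulVec_e, transpose_apply],
      show N.mulVec (e u) ⬝ᵥ e v = N v u from by rw [dot_e, mulVec_e],
      show (A + (SM M).mulVec (e p) + (A ⬝ᵥ e p) • e p') ⬝ᵥ (e u + e v)
        = (A u + M u p * M p u + A p * e p' u) + (A v + M v p * M p v + A p * e p' v) from by
        simp only [dotProduct_add, dot_e]
        rw [hC u, hC v]]
  have hrowN : ∀ i : Fin n, N p' i = 0 := by
    intro i
    by_cases hi : i = p'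
    · rw [hi]; exact hNp'' p'
    · rw [hN' i hi p']
      rw [e_apply, if_pos rfl, e_apply, if_neg (Ne.symm hi), h1', ← hrow' i]
      ring_nf
      rw [show (2:ZMod 2) = 0 by decide, mul_zero]
  by_cases hu : u = p'
  · rw [hu]; simp [hNp'']
  by_cases hv : v = p'
  · rw [hv]; simp [hNp'', hrowN]
  -- main case
  have hepu : e p' u = 0 := by rw [e_apply, if_neg hu]
  have hepv : e p' v = 0 := by rw [e_apply, if_neg hv]
  have hup : e u p' = 0 := by rw [e_apply, if_neg (Ne.symm hu)]
  have hvp : e v p' = 0 := by rw [e_apply, if_neg (Ne.symm hv)]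
  have ht : e v u = 1 → M v u = 0 ∧ M p v = M p u ∧ M v p = M u p ∧ A v = A u := by
    intro h
    have huv : u = v := by
      by_contra hne
      rw [e_apply, if_neg hne] at h
      exact absurd h (by decide)
    subst huv
    exact ⟨hd u, rfl, rfl, rfl⟩
  have step1 : (∑ i, N i u * N v i)
      = ∑ i, ((M i u + M p u * (M i p + e p' i + M u p * e u i))
          * (M v i + M p i * (M v p + M i p * e v i))) := by
    refine Finset.sum_congr rfl fun i _ => ?_
    rw [hN' u hu i]
    by_cases hi : i = p'
    · rw [hi]
      have hF : M p' u + M p u * (M p' p + e p' p' + M u p * e u p') = 0 := by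
        rw [e_apply, if_pos rfl, hup, h1', ← hrow' u]
        ring_nf
        rw [show (2:ZMod 2) = 0 by decide, mul_zero]
      rw [hF]; ring
    · have hG : N v i = M v i + M p i * (M v p + M i p * e v i) := by
        rw [hN' i hi v, hepv, e_comm i v]
        ring
      rw [hG]
  have step2 : (∑ i, ((M i u + M p u * (M i p + e p' i + M u p * e u i))
          * (M v i + M p i * (M v p + M i p * e v i))))
      = ∑ i, ( (M i u * M v i)
          + M v p * (M i u * M p i)
          + M p u * (M i p * M v i)
          + (M p u * M v p) * (M i p * M p i)
          + ((M i u + M p u * M i p) * (M p i * M i p)) * e v i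
          + (M p u * (M v i + M p i * (M v p + M i p * e v i))) * e p' i
          + ((M p u * M u p) * (M v i + M p i * (M v p + M i p * e v i))) * e u i ) := by
    refine Finset.sum_congr rfl fun i _ => ?_
    ring
  rw [step1, step2]
  simp only [Finset.sum_add_distrib, ← Finset.mul_sum, sum_mul_e]
  rw [hA' u v, hA' u p, hA' p v, hA' p p, hd p, hN' u hu v, hepv, e_comm u v,
      hepu, h2', h1', ← hcol' v]
  linear_combination key (M v u) (M p u) (M u p) (M p v) (M v p) (A u) (A v) (A p) (e v u) ht
end

section
/- Let G be a finite directed graph with adjacency matrix L over 𝔽₂, and suppose there is a vector A ∈ 𝔽₂ⁿ with ⟨Lu, Lᵀv⟩ = ⟨Lu, v⟩(1 + ⟨A, u + v⟩) for all standard basis vectors u, v. Then for every vertex u, the number of vertices w such that both edges u → w and w → u are present in G is even. -/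
open Matrix

theorem stmt_17 {n : ℕ} (G : Fin n → Fin n → Prop) [DecidableRel G]
    (hloop : ∀ v : Fin n, ¬ G v v)
    (L : Matrix (Fin n) (Fin n) (ZMod 2))
    (hL : ∀ u v : Fin n, L.mulVec (e u) ⬝ᵥ e v = if G u v then 1 else 0)
    (A : Fin n → ZMod 2)
    (hA : ∀ u v : Fin n, L.mulVec (e u) ⬝ᵥ Lᵀ.mulVec (e v) =
      (L.mulVec (e u) ⬝ᵥ e v) * (1 + A ⬝ᵥ (e u + e v))) :
    ∀ u : Fin n, Even (Finset.univ.filter fun w : Fin n => G u w ∧ G w u).card := by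
  intro u
  have hcol : ∀ (M : Matrix (Fin n) (Fin n) (ZMod 2)) (w i : Fin n),
      M.mulVec (e w) i = M i w := by
    intro M w i
    simp [e, mulVec_single]
  have hLij : ∀ u v : Fin n, L v u = if G u v then 1 else 0 := by
    intro u v
    have := hL u v
    rwa [show L.mulVec (e u) ⬝ᵥ e v = L v u by
      simp [e, dotProduct_single, hcol]] at this
  have key := hA u u
  have h0 : e u + e u = 0 := by
    funext i; simp [e]
    exact CharTwo.add_self_eq_zero _
  rw [h0] at key
  simp only [dotProduct_zero, add_zero, mul_one] at key
  have hrhs : L.mulVec (e u) ⬝ᵥ e u = 0 := by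
    rw [hL]; simp [hloop u]
  rw [hrhs] at key
  have hsum : (∑ i, (if G u i ∧ G i u then (1 : ZMod 2) else 0)) = 0 := by
    calc (∑ i, (if G u i ∧ G i u then (1 : ZMod 2) else 0))
        = ∑ i, (L *ᵥ e u) i * (Lᵀ *ᵥ e u) i := by
          apply Finset.sum_congr rfl
          intro i _
          rw [hcol, hcol, transpose_apply, hLij, hLij]
          by_cases h1 : G u i <;> by_cases h2 : G i u <;> simp [h1, h2]
      _ = 0 := key
  rw [Finset.sum_boole] at hsum
  have : ((Finset.univ.filter fun w : Fin n => G u w ∧ G w u).card : ZMod 2) = 0 := hsum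
  rw [ZMod.natCast_eq_zero_iff] at this
  exact (even_iff_two_dvd).mpr this
end
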